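/- Fix x ∈ ℝ^d with ‖x‖ = 1, γ ∈ (0,1), and a constant C_0 > 0. There is a universal constant C > 0 (e.g. C = 12) such that if m ≥ C·log(2/γ), then with probability at least 1 − γ over the random initialization (W_0, a), the bound |f(x; a, W)| ≤ 2·√(log(2/γ)) + C_0 holds simultaneously for all W ∈ B_{2,∞}(W_0, C_0/√m). -/

import Mathlib

open MeasureTheory ProbabilityTheory

/-- Product of `d` i.i.d. standard Gaussians: the law of a standard Gaussian
vector `N(0, I_d)` on `ℝ^d` (represented as `Fin d → ℝ`). -/
noncomputable def gaussVec (d : ℕ) : Measure (Fin d → ℝ) :=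
  Measure.pi fun _ => gaussianReal 0 1

/-- Law of `m` i.i.d. standard Gaussian vectors in `ℝ^d` (the initialization `W₀`). -/
noncomputable def gaussMat (m d : ℕ) : Measure (Fin m → Fin d → ℝ) :=
  Measure.pi fun _ => gaussVec d

/-- Law of `m` i.i.d. uniform random signs (encoded as booleans). -/
noncomputable def signsMeasure (m : ℕ) : Measure (Fin m → Bool) :=
  Measure.pi fun _ => (PMF.uniformOfFintype Bool).toMeasure

/-- Joint law of the random initialization `(W₀, a)`. -/
noncomputable def initMeasure (m d : ℕ) :
    Measure ((Fin m → Fin d → ℝ) × (Fin m → Bool)) :=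
  (gaussMat m d).prod (signsMeasure m)

/-- The sign `±1` encoded by a boolean. -/
def signOf (b : Bool) : ℝ := if b then 1 else -1

/-- Euclidean inner product on `Fin d → ℝ`. -/
def dotp {d : ℕ} (w x : Fin d → ℝ) : ℝ := ∑ i, w i * x i

/-- Euclidean norm on `Fin d → ℝ`. -/
noncomputable def euclNorm {d : ℕ} (w : Fin d → ℝ) : ℝ :=
  Real.sqrt (∑ i, (w i) ^ 2)

/-- Two-layer ReLU network `f(x; a, W) = (1/√m) ∑ₛ aₛ · max(0, ⟨wₛ, x⟩)`. -/
noncomputable def netF {m d : ℕ} (a : Fin m → Bool) (W : Fin m → Fin d → ℝ)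
    (x : Fin d → ℝ) : ℝ :=
  (1 / Real.sqrt m) * ∑ s, signOf (a s) * max 0 (dotp (W s) x)

/-- (a.e.) input gradient `G(x; a, W) = (1/√m) ∑ₛ aₛ · 𝟙[⟨wₛ, x⟩ > 0] · wₛ`. -/
noncomputable def netG {m d : ℕ} (a : Fin m → Bool) (W : Fin m → Fin d → ℝ)
    (x : Fin d → ℝ) : Fin d → ℝ :=
  fun i => (1 / Real.sqrt m) *
    ∑ s, signOf (a s) * (if 0 < dotp (W s) x then (1 : ℝ) else 0) * W s i

/-- `W ∈ B_{2,∞}(W₀, V)`: every column of `W` is within Euclidean distance `V`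
of the corresponding column of `W₀`. -/
def inBall {m d : ℕ} (W0 W : Fin m → Fin d → ℝ) (V : ℝ) : Prop :=
  ∀ s, euclNorm (fun i => W s i - W0 s i) ≤ V

/-!
At initialization the output is `S / √m` with `S = ∑ₛ aₛ · relu ⟨w_{s,0}, x⟩`, and
`⟨w_{s,0}, x⟩ ~ N(0, 1)` since `‖x‖ = 1`. A random sign times a variable dominated by a Gaussian
`g` has moment generating function `E cosh (t · relu g) ≤ E cosh (t g) = exp (t² / 2)`, so the
independent summands are 1-sub-Gaussian, `S` is `m`-sub-Gaussian, and the Chernoff bound gives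
`|S| < 2 √(m log (2/γ))` outside an event of probability `2 exp (-2 log (2/γ)) = γ² / 2 ≤ γ`.
The ReLU being 1-Lipschitz, moving every column by at most `C₀ / √m` moves each of the `m`
summands by at most `C₀ / √m`, hence the output by at most `C₀`.
-/

open Real
open scoped NNReal

instance (d : ℕ) : IsProbabilityMeasure (gaussVec d) := by
  unfold gaussVec; infer_instance

instance (m d : ℕ) : IsProbabilityMeasure (initMeasure m d) := by
  unfold initMeasure gaussMat signsMeasure; infer_instance

lemma Real.exp_abs_le_two_mul_cosh (x : ℝ) : exp |x| ≤ 2 * cosh x := by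
  rw [cosh_eq]; linarith [exp_abs_le x]

lemma integral_uniformOfFintype_bool (f : Bool → ℝ) :
    ∫ b, f b ∂(PMF.uniformOfFintype Bool).toMeasure = (f true + f false) / 2 := by
  rw [integral_fintype .of_finite]
  simp only [Fintype.sum_bool, measureReal_def, smul_eq_mul, PMF.uniformOfFintype_apply,
    PMF.toMeasure_apply_singleton _ _ (measurableSet_singleton _), Fintype.card_bool]
  norm_num
  ring

lemma abs_signOf_mul (b : Bool) (z : ℝ) : |signOf b * z| = |z| := by
  cases b <;> simp [signOf]

lemma abs_max_zero_le_abs (y : ℝ) : |max 0 y| ≤ |y| := by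
  rw [abs_of_nonneg (le_max_left _ _)]
  exact max_le (abs_nonneg _) (le_abs_self _)

lemma ofReal_one_sub_le_prob_compl {Ω : Type*} [MeasurableSpace Ω] {μ : Measure Ω}
    [IsProbabilityMeasure μ] {s : Set Ω} (hs : NullMeasurableSet s μ) {γ : ℝ}
    (h : μ.real s ≤ γ) : ENNReal.ofReal (1 - γ) ≤ μ sᶜ := by
  rw [← ofReal_measureReal, probReal_compl_eq_one_sub₀ hs]
  exact ENNReal.ofReal_le_ofReal (by linarith)

namespace ProbabilityTheory

lemma hasSubgaussianMGF_id_gaussianReal (v : ℝ≥0) :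
    HasSubgaussianMGF id v (gaussianReal 0 v) where
  integrable_exp_mul := integrable_exp_mul_gaussianReal
  mgf_le t := by rw [mgf_id_gaussianReal]; simp

namespace HasSubgaussianMGF

variable {Ω : Type*} [MeasurableSpace Ω] {μ : Measure Ω} {Y Z : Ω → ℝ} {c : ℝ≥0}

lemma measureReal_abs_ge_le [IsFiniteMeasure μ] (h : HasSubgaussianMGF Y c μ) {ε : ℝ}
    (hε : 0 ≤ ε) : μ.real {ω | ε ≤ |Y ω|} ≤ 2 * exp (-ε ^ 2 / (2 * c)) := by
  have hsplit : {ω | ε ≤ |Y ω|} ⊆ {ω | ε ≤ Y ω} ∪ {ω | ε ≤ (-Y) ω} :=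
    fun ω (hω : ε ≤ |Y ω|) => (le_abs.mp hω : ε ≤ Y ω ∨ ε ≤ -Y ω)
  calc μ.real {ω | ε ≤ |Y ω|} ≤ μ.real {ω | ε ≤ Y ω} + μ.real {ω | ε ≤ (-Y) ω} :=
        (measureReal_mono hsplit).trans (measureReal_union_le _ _)
    _ ≤ 2 * exp (-ε ^ 2 / (2 * c)) := by
        linarith [h.measure_ge_le hε, h.neg.measure_ge_le hε]

lemma measureReal_abs_ge_two_sqrt_mul_log_le [IsFiniteMeasure μ] (h : HasSubgaussianMGF Y c μ)
    (hc : 0 < c) {γ : ℝ} (hγ : 0 < γ) (hγ2 : γ ≤ 2) :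
    μ.real {ω | 2 * √(c * log (2 / γ)) ≤ |Y ω|} ≤ γ := by
  set L := log (2 / γ)
  have hL : 0 ≤ L := log_nonneg ((one_le_div hγ).mpr hγ2)
  have hexp : exp (-(2 * √(c * L)) ^ 2 / (2 * c)) = (γ / 2) ^ 2 := by
    rw [mul_pow, sq_sqrt (by positivity), show -(2 ^ 2 * (c * L)) / (2 * c) = -(L + L) by
      field_simp; ring, exp_neg, exp_add, exp_log (by positivity)]
    field_simp
  calc _ ≤ 2 * exp (-(2 * √(c * L)) ^ 2 / (2 * c)) := h.measureReal_abs_ge_le (by positivity)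
    _ ≤ γ := by rw [hexp]; nlinarith

lemma integrable_cosh_mul (hY : HasSubgaussianMGF Y c μ) (t : ℝ) :
    Integrable (fun ω => cosh (t * Y ω)) μ := by
  simp_rw [cosh_eq, ← neg_mul]
  exact ((hY.integrable_exp_mul t).add (hY.integrable_exp_mul (-t))).div_const 2

lemma integral_cosh_mul_le (hY : HasSubgaussianMGF Y c μ) (t : ℝ) :
    ∫ ω, cosh (t * Y ω) ∂μ ≤ exp (c * t ^ 2 / 2) := by
  simp_rw [cosh_eq, ← neg_mul]
  rw [integral_div, integral_add (hY.integrable_exp_mul t) (hY.integrable_exp_mul (-t))]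
  have h := add_le_add (hY.mgf_le t) (hY.mgf_le (-t))
  rw [neg_sq] at h
  unfold mgf at h
  linarith

lemma signOf_mul_of_abs_le [IsFiniteMeasure μ] (hY : HasSubgaussianMGF Y c μ)
    (hZ : AEStronglyMeasurable Z μ) (hZY : ∀ ω, |Z ω| ≤ |Y ω|) :
    HasSubgaussianMGF (fun p : Ω × Bool => signOf p.2 * Z p.1) c
      (μ.prod (PMF.uniformOfFintype Bool).toMeasure) := by
  have hint (t : ℝ) : Integrable (fun p : Ω × Bool => exp (t * (signOf p.2 * Z p.1)))
      (μ.prod (PMF.uniformOfFintype Bool).toMeasure) := by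
    refine (((hY.integrable_cosh_mul t).const_mul 2).comp_fst _).mono' ?_ (ae_of_all _ ?_)
    · have : AEStronglyMeasurable (fun p : Ω × Bool => signOf p.2)
          (μ.prod (PMF.uniformOfFintype Bool).toMeasure) :=
        (measurable_of_countable signOf).comp measurable_snd |>.aestronglyMeasurable
      exact continuous_exp.comp_aestronglyMeasurable ((this.mul hZ.comp_fst).const_mul t)
    rintro ⟨ω, b⟩
    calc ‖exp (t * (signOf b * Z ω))‖ ≤ exp |t * Y ω| := by
          rw [norm_of_nonneg (exp_nonneg _), exp_le_exp, abs_mul t (Y ω)]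
          refine (le_abs_self _).trans ?_
          rw [abs_mul, abs_signOf_mul]
          exact mul_le_mul_of_nonneg_left (hZY ω) (abs_nonneg t)
      _ ≤ 2 * cosh (t * Y ω) := exp_abs_le_two_mul_cosh _
  refine ⟨hint, fun t => ?_⟩
  calc mgf (fun p : Ω × Bool => signOf p.2 * Z p.1) _ t = ∫ ω, cosh (t * Z ω) ∂μ := by
        rw [mgf, integral_prod _ (hint t)]
        refine integral_congr_ae (ae_of_all _ fun ω => ?_)
        simp [integral_uniformOfFintype_bool, signOf, cosh_eq, neg_mul, mul_neg]
    _ ≤ ∫ ω, cosh (t * Y ω) ∂μ := by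
        refine integral_mono_of_nonneg (ae_of_all _ fun ω => (cosh_pos _).le)
          (hY.integrable_cosh_mul t) (ae_of_all _ fun ω => ?_)
        rw [cosh_le_cosh, abs_mul, abs_mul]
        exact mul_le_mul_of_nonneg_left (hZY ω) (abs_nonneg t)
    _ ≤ exp (c * t ^ 2 / 2) := hY.integral_cosh_mul_le t

end HasSubgaussianMGF

end ProbabilityTheory

lemma measurable_dotp {d : ℕ} (x : Fin d → ℝ) : Measurable fun w : Fin d → ℝ => dotp w x := by
  unfold dotp; fun_prop

lemma hasSubgaussianMGF_dotp_gaussVec {d : ℕ} (x : Fin d → ℝ) :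
    HasSubgaussianMGF (fun w => dotp w x) (∑ i, x i ^ 2).toNNReal (gaussVec d) := by
  have hcoord (i : Fin d) : HasSubgaussianMGF (fun w : Fin d → ℝ => x i * w i)
      (⟨x i ^ 2, sq_nonneg _⟩ * 1) (gaussVec d) := by
    have h := (hasSubgaussianMGF_id_gaussianReal 1).const_mul (x i)
    rw [← (measurePreserving_eval (fun _ : Fin d => gaussianReal 0 1) i).map_eq] at h
    exact h.of_map (measurable_pi_apply i).aemeasurable
  have hsum := HasSubgaussianMGF.sum_of_iIndepFun
    (iIndepFun_pi (μ := fun _ : Fin d => gaussianReal 0 1) (X := fun i t => x i * t)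
      fun _ => by fun_prop) (s := Finset.univ) fun i _ => hcoord i
  convert hsum using 1
  · ext w; simp only [dotp, mul_comm]
  · ext
    rw [Real.coe_toNNReal _ (Finset.sum_nonneg fun i _ => sq_nonneg (x i)), NNReal.coe_sum]
    exact Finset.sum_congr rfl fun i _ => (mul_one _).symm
  · rfl

lemma hasSubgaussianMGF_sum_signOf_mul_relu {m d : ℕ} {x : Fin d → ℝ} {c : ℝ≥0}
    (hx : HasSubgaussianMGF (fun w => dotp w x) c (gaussVec d)) :
    HasSubgaussianMGF (fun p : (Fin m → Fin d → ℝ) × (Fin m → Bool) =>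
      ∑ s, signOf (p.2 s) * max 0 (dotp (p.1 s) x)) (m * c) (initMeasure m d) := by
  set ν := (PMF.uniformOfFintype Bool).toMeasure
  have hneuron : HasSubgaussianMGF (fun q : (Fin d → ℝ) × Bool => signOf q.2 * max 0 (dotp q.1 x))
      c ((gaussVec d).prod ν) :=
    hx.signOf_mul_of_abs_le (measurable_const.max (measurable_dotp x)).aestronglyMeasurable
      fun w => abs_max_zero_le_abs _
  have hsum := HasSubgaussianMGF.sum_of_iIndepFun (s := Finset.univ)
    (iIndepFun_pi (X := fun (_ : Fin m) (q : (Fin d → ℝ) × Bool) => signOf q.2 * max 0 (dotp q.1 x))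
      fun _ => hneuron.aemeasurable)
    fun s _ => by
      have heval := measurePreserving_eval (fun _ : Fin m => (gaussVec d).prod ν) s
      rw [← heval.map_eq] at hneuron
      exact hneuron.of_map heval.measurable.aemeasurable
  have he := measurePreserving_arrowProdEquivProdArrow (Fin d → ℝ) Bool (Fin m)
    (fun _ => gaussVec d) (fun _ => ν)
  rw [← (MeasurePreserving.symm _ he).map_eq] at hsum
  rw [Finset.sum_const, Finset.card_univ, Fintype.card_fin, nsmul_eq_mul] at hsum
  exact (hsum.of_map (MeasurableEquiv.measurable _).aemeasurable :)

lemma abs_dotp_le {d : ℕ} (u v : Fin d → ℝ) : |dotp u v| ≤ euclNorm u * euclNorm v := by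
  rw [← sqrt_sq_eq_abs, euclNorm, euclNorm, ← sqrt_mul (by positivity)]
  exact sqrt_le_sqrt (Finset.sum_mul_sq_le_sq_mul_sq _ u v)

lemma abs_netF_sub_le {m d : ℕ} (a : Fin m → Bool) {W0 W : Fin m → Fin d → ℝ} {V : ℝ}
    (hW : inBall W0 W V) (x : Fin d → ℝ) :
    |netF a W x - netF a W0 x| ≤ √m * (V * euclNorm x) := by
  have hneuron (s : Fin m) : |signOf (a s) * max 0 (dotp (W s) x) -
      signOf (a s) * max 0 (dotp (W0 s) x)| ≤ V * euclNorm x := by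
    rw [← mul_sub, abs_signOf_mul, max_comm 0, max_comm 0]
    calc _ ≤ |dotp (W s) x - dotp (W0 s) x| := abs_max_sub_max_le_abs _ _ _
      _ = |dotp (fun i => W s i - W0 s i) x| := by
          simp only [dotp, ← Finset.sum_sub_distrib, sub_mul]
      _ ≤ V * euclNorm x :=
          (abs_dotp_le _ _).trans (mul_le_mul_of_nonneg_right (hW s) (sqrt_nonneg _))
  calc |netF a W x - netF a W0 x|
      = 1 / √m * |∑ s, (signOf (a s) * max 0 (dotp (W s) x) -
          signOf (a s) * max 0 (dotp (W0 s) x))| := by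
        rw [netF, netF, ← mul_sub, ← Finset.sum_sub_distrib, abs_mul,
          abs_of_nonneg (by positivity)]
    _ ≤ 1 / √m * ∑ _s : Fin m, V * euclNorm x :=
        mul_le_mul_of_nonneg_left ((Finset.abs_sum_le_sum_abs _ _).trans
          (Finset.sum_le_sum fun s _ => hneuron s)) (by positivity)
    _ = √m * (V * euclNorm x) := by
        rw [Finset.sum_const, Finset.card_univ, Fintype.card_fin, nsmul_eq_mul, ← mul_assoc,
          one_div_mul_eq_div, div_sqrt]

/-- Lemma bounding the function value: there is a universal constant
`C > 0` such that if `m ≥ C·log(2/γ)`, then with probability at least `1 - γ`,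
`|f(x; a, W)| ≤ 2·√(log(2/γ)) + C₀` simultaneously for all `W` in the lazy-regime ball. -/
theorem function_value_bound :
    ∃ C : ℝ, 0 < C ∧
      ∀ (d m : ℕ) (x : Fin d → ℝ) (γ C0 : ℝ),
        euclNorm x = 1 → 0 < γ → γ < 1 → 0 < C0 →
        C * Real.log (2 / γ) ≤ (m : ℝ) →
        ENNReal.ofReal (1 - γ) ≤
          initMeasure m d
            {p | ∀ W : Fin m → Fin d → ℝ, inBall p.1 W (C0 / Real.sqrt m) →
              |netF p.2 W x| ≤ 2 * Real.sqrt (Real.log (2 / γ)) + C0} := by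
  refine ⟨1, one_pos, fun d m x γ C0 hx hγ hγ1 _ hm => ?_⟩
  have hm0 : (0 : ℝ) < m := lt_of_lt_of_le (by simpa using log_pos ((one_lt_div hγ).mpr
    (by linarith))) hm
  have hS : HasSubgaussianMGF (fun p : (Fin m → Fin d → ℝ) × (Fin m → Bool) =>
      ∑ s, signOf (p.2 s) * max 0 (dotp (p.1 s) x)) m (initMeasure m d) := by
    rw [euclNorm, sqrt_eq_one] at hx
    simpa [hx] using hasSubgaussianMGF_sum_signOf_mul_relu (m := m)
      (hasSubgaussianMGF_dotp_gaussVec x)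
  refine (ofReal_one_sub_le_prob_compl (nullMeasurableSet_le aemeasurable_const
    hS.aemeasurable.abs) (hS.measureReal_abs_ge_two_sqrt_mul_log_le (by exact_mod_cast hm0)
      hγ (by linarith))).trans (measure_mono fun p hp W hW => ?_)
  have h0 : |netF p.2 p.1 x| ≤ 2 * √(log (2 / γ)) := by
    rw [netF, abs_mul, abs_of_pos (by positivity), one_div_mul_eq_div, div_le_iff₀ (by positivity)]
    simp only [Set.mem_compl_iff, Set.mem_ofPred_eq, not_le, NNReal.coe_natCast,
      sqrt_mul hm0.le] at hp
    linarith
  have h1 := abs_netF_sub_le p.2 hW x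
  rw [hx, mul_one, mul_div_cancel₀ _ (sqrt_pos.mpr hm0).ne'] at h1
  linarith [abs_sub_abs_le_abs_sub (netF p.2 W x) (netF p.2 p.1 x)]
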